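/- Let p(x) = a₀·x·a₁·x·a₂ ⋯ x·aₙ be a monomial of degree n over a division ring D (with fixed coefficients a₀,…,aₙ ∈ D). Then the n-th iterated Gâteaux derivative of p at any point x, evaluated with all increments equal to h, equals n!·p(h), i.e., ∂ⁿp(x)(h,…,h) = n!·p(h). -/

import Mathlib

/-!
Along the line `t ↦ x + t • h` the iterated Gâteaux derivatives in direction `h` are the
ordinary iterated derivatives of `gₙ t = p (x + t • h)`. As the real scalar `t` is central,
`gₙ₊₁ t = gₙ t * (x aₙ₊₁ + t • (h aₙ₊₁))` has an affine right factor, so Leibniz's rule gives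
`gₙ₊₁⁽ⁿ⁺¹⁾ = gₙ⁽ⁿ⁺¹⁾ * (x aₙ₊₁ + t • (h aₙ₊₁)) + (n + 1) • gₙ⁽ⁿ⁾ * h aₙ₊₁`. By induction
`gₙ⁽ⁿ⁾` is the constant `n! • p h`, so the first term vanishes and the second is
`(n + 1)! • p h * h aₙ₊₁`.
-/

open Filter Topology

variable {D : Type*} [NormedDivisionRing D] [NormedAlgebra ℝ D]

/-- The Gâteaux derivative of `f` at `x` in direction `h` (real directional derivative). -/
noncomputable def gateauxDeriv (f : D → D) (x h : D) : D :=
  limUnder (𝓝[≠] (0 : ℝ)) fun t : ℝ => t⁻¹ • (f (x + t • h) - f x)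

/-- The `n`-th iterated Gâteaux derivative of `f` at `x` with increments `hs 0, …, hs (n-1)`,
iterated in the base point: `∂ⁿf(x)(h₁;…;hₙ) = ∂(∂ⁿ⁻¹f(·)(h₁;…;hₙ₋₁))(x)(hₙ)`. -/
noncomputable def gateauxIter (f : D → D) : ℕ → (ℕ → D) → D → D
  | 0, _, x => f x
  | n + 1, hs, x => gateauxDeriv (fun y => gateauxIter f n hs y) x (hs n)

/-- The monomial `a₀·x·a₁·x·a₂ ⋯ x·aₙ` of degree `n`. -/
def monomial (a : ℕ → D) : ℕ → D → D
  | 0, _ => a 0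
  | n + 1, x => monomial a n x * x * a (n + 1)

open scoped ContDiff

section AffineFactor

variable {𝕜 A : Type*} [NontriviallyNormedField 𝕜] [NormedRing A] [NormedAlgebra 𝕜 A]

theorem HasDerivAt.mul_affine {f : 𝕜 → A} {f' : A} {t : 𝕜} (hf : HasDerivAt f f' t)
    (u v : A) :
    HasDerivAt (fun s => f s * (u + s • v)) (f' * (u + t • v) + f t * v) t := by
  have hℓ : HasDerivAt (fun s : 𝕜 => u + s • v) v t := by
    simpa using ((hasDerivAt_id t).smul_const v).const_add u
  exact hf.mul hℓ

theorem iteratedDeriv_succ_mul_affine {f : 𝕜 → A} (hf : ContDiff 𝕜 ∞ f) (u v : A)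
    (m : ℕ) :
    iteratedDeriv (m + 1) (fun s => f s * (u + s • v)) = fun s =>
      iteratedDeriv (m + 1) f s * (u + s • v) + (m + 1) • (iteratedDeriv m f s * v) := by
  have hasDeriv (k : ℕ) (t : 𝕜) :
      HasDerivAt (iteratedDeriv k f) (iteratedDeriv (k + 1) f t) t := by
    rw [iteratedDeriv_succ]
    exact (hf.differentiable_iteratedDeriv k (mod_cast ENat.natCast_lt_top k)).differentiableAt
      |>.hasDerivAt
  induction m with
  | zero =>
    funext t
    simpa using ((hasDeriv 0 t).mul_affine u v).deriv
  | succ m ih =>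
    funext t
    rw [iteratedDeriv_succ, ih]
    refine (((hasDeriv (m + 1) t).mul_affine u v).add
      (((hasDeriv m t).mul_const v).const_smul (m + 1))).deriv.trans ?_
    rw [add_assoc, ← succ_nsmul']

end AffineFactor

theorem gateauxDeriv_eq_of_hasDerivAt {f : D → D} {x h d : D}
    (hd : HasDerivAt (fun t : ℝ => f (x + t • h)) d 0) : gateauxDeriv f x h = d := by
  simpa [gateauxDeriv] using hd.tendsto_slope_zero.limUnder_eq

theorem gateauxIter_add_smul_eq_iteratedDeriv {f : D → D} {x h : D}
    (hf : ContDiff ℝ ∞ fun t : ℝ => f (x + t • h)) (k : ℕ) (s : ℝ) :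
    gateauxIter f k (fun _ => h) (x + s • h) = iteratedDeriv k (fun t => f (x + t • h)) s := by
  induction k generalizing s with
  | zero => simp [gateauxIter]
  | succ k ih =>
    refine gateauxDeriv_eq_of_hasDerivAt ?_
    have hline : (fun t : ℝ => gateauxIter f k (fun _ => h) (x + s • h + t • h)) =
        fun t => iteratedDeriv k (fun t => f (x + t • h)) (s + t) := by
      funext t
      rw [add_assoc, ← add_smul, ih]
    rw [hline, iteratedDeriv_succ]
    refine HasDerivAt.comp_const_add s 0 ?_
    have hg := hf.differentiable_iteratedDeriv k (mod_cast ENat.natCast_lt_top k)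
    simpa using (hg (s + 0)).hasDerivAt

theorem monomial_succ_add_smul (a : ℕ → D) (n : ℕ) (x h : D) (t : ℝ) :
    monomial a (n + 1) (x + t • h) =
      monomial a n (x + t • h) * (x * a (n + 1) + t • (h * a (n + 1))) := by
  simp only [monomial, mul_assoc, add_mul, smul_mul_assoc]

theorem contDiff_monomial_add_smul (a : ℕ → D) (n : ℕ) (x h : D) :
    ContDiff ℝ ∞ fun t : ℝ => monomial a n (x + t • h) := by
  induction n with
  | zero => exact contDiff_const
  | succ n ih =>
    simp only [monomial_succ_add_smul]
    exact ih.mul (contDiff_const.add (contDiff_id.smul contDiff_const))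

theorem iteratedDeriv_monomial_add_smul (a : ℕ → D) (n : ℕ) (x h : D) :
    iteratedDeriv n (fun t : ℝ => monomial a n (x + t • h)) =
      fun _ => n.factorial • monomial a n h := by
  induction n with
  | zero => simp [monomial]
  | succ n ih =>
    simp only [monomial_succ_add_smul]
    rw [iteratedDeriv_succ_mul_affine (contDiff_monomial_add_smul a n x h), iteratedDeriv_succ,
      ih]
    funext t
    simp [monomial, Nat.factorial_succ, mul_smul, mul_assoc]

theorem gateaux_iter_monomial_diag (a : ℕ → D) (n : ℕ) (x h : D) :
    gateauxIter (monomial a n) n (fun _ => h) x = n.factorial • monomial a n h := by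
  simpa [iteratedDeriv_monomial_add_smul] using
    gateauxIter_add_smul_eq_iteratedDeriv (contDiff_monomial_add_smul a n x h) n 0
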